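/- arXiv:1408.3622 — 2 statements merged into one kernel-verified Lean document; each statement's English description precedes it below -/
import Mathlib

section
/- For the LIRK+AMF scheme applied to the test problem h f(y) = iwy, hL = z_1 + z_2, hL̃ = z_1 + z_2 - γz_1z_2, the stability function R(z_1, z_2, iw) = 1 + (iw b + z b̂)ᵀ ((1 + γ²z_1z_2)I - z - iw A)^{-1} 1 with z = z_1 + z_2 satisfies R(z_1, z_2, iw) → 1 as z_1 → -∞ and z_2 → -∞ (for fixed w), i.e., the scheme is only weakly stable for very stiff problems. -/
open Matrix Filter Topology

/-!
Along the diagonal `z₁ = z₂ = t`, both `(1 + γ²t²)I - 2tÂ - iwA` and `iwb + 2tb̂` carry a factor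
`t²`, which cancels in `R`. In the variable `u = t⁻¹` the stability function becomes
`1 + (iwu²b + 2ub̂)ᵀ N(u)⁻¹ 𝟙` with `N(u) = (u² + γ²)I - 2uÂ - iwu²A`, a continuous function of `u`
near `u = 0` since `N(0) = γ²I` is invertible; its value there is `1`.
-/

namespace Matrix

variable {n K : Type*} [Fintype n] [DecidableEq n] [Field K]

theorem inv_smul_of_ne_zero {c : K} (hc : c ≠ 0) (N : Matrix n n K) : (c • N)⁻¹ = c⁻¹ • N⁻¹ := by
  by_cases hN : IsUnit N.det
  · exact inv_smul' N (Units.mk0 c hc) hN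
  · have hcN : ¬IsUnit (c • N).det := by simpa [isUnit_iff_ne_zero, det_smul, hc] using hN
    rw [nonsing_inv_apply_not_isUnit _ hN, nonsing_inv_apply_not_isUnit _ hcN, smul_zero]

end Matrix

section TopologicalField

variable {α n K : Type*} [Fintype n] [DecidableEq n] [Field K] [TopologicalSpace K]
  [IsTopologicalDivisionRing K]

theorem Filter.Tendsto.matrix_inv {l : Filter α} {N : α → Matrix n n K} {N₀ : Matrix n n K}
    (hN : Tendsto N l (𝓝 N₀)) (hN₀ : N₀.det ≠ 0) : Tendsto (fun a => (N a)⁻¹) l (𝓝 N₀⁻¹) := by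
  have hinv : ContinuousAt Ring.inverse N₀.det := by
    rw [Ring.inverse_eq_inv']
    exact continuousAt_inv₀ hN₀
  exact (continuousAt_matrix_inv N₀ hinv).tendsto.comp hN

theorem Filter.Tendsto.dotProduct_inv_mulVec {l : Filter α} {c : α → n → K} {c₀ : n → K}
    {N : α → Matrix n n K} {N₀ : Matrix n n K} (hc : Tendsto c l (𝓝 c₀))
    (hN : Tendsto N l (𝓝 N₀)) (hN₀ : N₀.det ≠ 0) (v : n → K) :
    Tendsto (fun a => c a ⬝ᵥ ((N a)⁻¹ *ᵥ v)) l (𝓝 (c₀ ⬝ᵥ (N₀⁻¹ *ᵥ v))) := by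
  have hcont : Continuous fun p : (n → K) × Matrix n n K => p.1 ⬝ᵥ (p.2 *ᵥ v) :=
    continuous_fst.dotProduct (continuous_snd.matrix_mulVec continuous_const)
  exact (hcont.tendsto _).comp (hc.prodMk_nhds (hN.matrix_inv hN₀))

end TopologicalField

section StabilityFunction

variable {n : Type*} [DecidableEq n] (γ w : ℝ) (A Ahat : Matrix n n ℝ)

noncomputable def stageMatrix (z₁ z₂ : ℝ) : Matrix n n ℂ :=
  ((1 + γ ^ 2 * z₁ * z₂ : ℝ) : ℂ) • 1 - ((z₁ + z₂ : ℝ) : ℂ) • Ahat.map Complex.ofReal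
    - ((w : ℂ) * Complex.I) • A.map Complex.ofReal

noncomputable def rescaledStageMatrix (u : ℝ) : Matrix n n ℂ :=
  ((u ^ 2 + γ ^ 2 : ℝ) : ℂ) • 1 - ((2 * u : ℝ) : ℂ) • Ahat.map Complex.ofReal
    - ((w : ℂ) * Complex.I * (u ^ 2 : ℝ)) • A.map Complex.ofReal

theorem stageMatrix_diag_eq {t : ℝ} (ht : t ≠ 0) :
    stageMatrix γ w A Ahat t t = ((t : ℂ) ^ 2) • rescaledStageMatrix γ w A Ahat t⁻¹ := by
  have htc : (t : ℂ) ≠ 0 := Complex.ofReal_ne_zero.2 ht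
  ext i j
  simp only [stageMatrix, rescaledStageMatrix, Matrix.sub_apply, Matrix.smul_apply, smul_eq_mul]
  push_cast
  field_simp
  ring

variable [Fintype n] (b bhat : n → ℝ)

noncomputable def stabilityFunction (z₁ z₂ : ℝ) : ℂ :=
  1 + (fun i => (w : ℂ) * Complex.I * (b i : ℂ) + ((z₁ + z₂ : ℝ) : ℂ) * (bhat i : ℂ)) ⬝ᵥ
    ((stageMatrix γ w A Ahat z₁ z₂)⁻¹ *ᵥ fun _ => 1)

noncomputable def rescaledWeights (u : ℝ) : n → ℂ :=
  fun i => (w : ℂ) * Complex.I * (u ^ 2 : ℝ) * (b i : ℂ) + ((2 * u : ℝ) : ℂ) * (bhat i : ℂ)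

noncomputable def rescaledStabilityFunction (u : ℝ) : ℂ :=
  1 + rescaledWeights w b bhat u ⬝ᵥ ((rescaledStageMatrix γ w A Ahat u)⁻¹ *ᵥ fun _ => 1)

theorem stabilityFunction_diag_eq {t : ℝ} (ht : t ≠ 0) :
    stabilityFunction γ w A Ahat b bhat t t = rescaledStabilityFunction γ w A Ahat b bhat t⁻¹ := by
  have htc : (t : ℂ) ≠ 0 := Complex.ofReal_ne_zero.2 ht
  have hweights : (fun i => (w : ℂ) * Complex.I * (b i : ℂ) + ((t + t : ℝ) : ℂ) * (bhat i : ℂ)) =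
      ((t : ℂ) ^ 2) • rescaledWeights w b bhat t⁻¹ := by
    ext i
    simp only [rescaledWeights, Pi.smul_apply, smul_eq_mul]
    push_cast
    field_simp
    ring
  rw [stabilityFunction, rescaledStabilityFunction, stageMatrix_diag_eq γ w A Ahat ht,
    inv_smul_of_ne_zero (pow_ne_zero 2 htc), smul_mulVec, dotProduct_smul, hweights,
    smul_dotProduct, smul_smul, inv_mul_cancel₀ (pow_ne_zero 2 htc), one_smul]

theorem tendsto_rescaledStabilityFunction (hγ : γ ≠ 0) :
    Tendsto (rescaledStabilityFunction γ w A Ahat b bhat) (𝓝 0) (𝓝 1) := by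
  have hN : Continuous (rescaledStageMatrix γ w A Ahat) := by
    unfold rescaledStageMatrix
    fun_prop
  have hN₀ : rescaledStageMatrix γ w A Ahat 0 = ((γ ^ 2 : ℝ) : ℂ) • 1 := by
    simp [rescaledStageMatrix]
  have hdet : (rescaledStageMatrix γ w A Ahat 0).det ≠ 0 := by
    simp [hN₀, hγ]
  have hweights : Tendsto (rescaledWeights w b bhat) (𝓝 0) (𝓝 0) := by
    have hcont : Continuous (rescaledWeights w b bhat) := by
      unfold rescaledWeights
      fun_prop
    have h₀ : rescaledWeights w b bhat 0 = 0 := by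
      ext i
      simp [rescaledWeights]
    simpa only [h₀] using hcont.tendsto 0
  have hlim := (tendsto_const_nhds (x := (1 : ℂ))).add
    (hweights.dotProduct_inv_mulVec (hN.tendsto 0) hdet fun _ => 1)
  rwa [zero_dotProduct, add_zero] at hlim

theorem tendsto_stabilityFunction_diag_atBot (hγ : γ ≠ 0) :
    Tendsto (fun t => stabilityFunction γ w A Ahat b bhat t t) atBot (𝓝 1) := by
  refine ((tendsto_rescaledStabilityFunction γ w A Ahat b bhat hγ).comp
    tendsto_inv_atBot_zero).congr' ?_
  filter_upwards [eventually_lt_atBot 0] with t ht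
  exact (stabilityFunction_diag_eq γ w A Ahat b bhat ht.ne).symm

end StabilityFunction

theorem lirk_amf_weak_stability_general {s : ℕ}
    (A Ahat : Matrix (Fin s) (Fin s) ℝ) (b bhat : Fin s → ℝ) (γ w : ℝ) (hγ : 0 < γ)
    (M : ℝ → ℝ → Matrix (Fin s) (Fin s) ℂ)
    (hM : ∀ z₁ z₂ : ℝ, M z₁ z₂ =
      ((1 + γ ^ 2 * z₁ * z₂ : ℝ) : ℂ) • (1 : Matrix (Fin s) (Fin s) ℂ)
        - ((z₁ + z₂ : ℝ) : ℂ) • Ahat.map Complex.ofReal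
        - ((w : ℂ) * Complex.I) • A.map Complex.ofReal)
    (R : ℝ → ℝ → ℂ)
    (hR : ∀ z₁ z₂ : ℝ, R z₁ z₂ =
      1 + (fun i => (w : ℂ) * Complex.I * (b i : ℂ) + ((z₁ + z₂ : ℝ) : ℂ) * (bhat i : ℂ)) ⬝ᵥ
        ((M z₁ z₂)⁻¹ *ᵥ fun _ => 1)) :
    Tendsto (fun t : ℝ => R t t) atBot (nhds 1) := by
  have hRM : ∀ t, R t t = stabilityFunction γ w A Ahat b bhat t t := fun t => by
    rw [hR, hM]; rfl
  simpa only [hRM] using tendsto_stabilityFunction_diag_atBot γ w A Ahat b bhat hγ.ne'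

/-- Weak stability of the LIRK+AMF scheme: for the test problem `hf(y)=iwy`,
`hL = z₁+z₂`, `hL̃ = z₁+z₂-γz₁z₂`, the stability function
`R(z₁,z₂,iw) = 1 + (iwb + zb̂)ᵀ((1+γ²z₁z₂)I - zÂ - iwA)⁻¹𝟙` (with `z = z₁+z₂`)
tends to `1` as `z₁ = z₂ → -∞` for fixed `w`. -/
theorem lirk_amf_weak_stability {s : ℕ}
    (A Ahat : Matrix (Fin s) (Fin s) ℝ) (b bhat : Fin s → ℝ) (γ w : ℝ) (hγ : 0 < γ)
    (hA_strict : ∀ i j : Fin s, i ≤ j → A i j = 0)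
    (hAhat_lower : ∀ i j : Fin s, i < j → Ahat i j = 0)
    (hAhat_diag : ∀ i : Fin s, Ahat i i = γ)
    (M : ℝ → ℝ → Matrix (Fin s) (Fin s) ℂ)
    (hM : ∀ z₁ z₂ : ℝ, M z₁ z₂ =
      ((1 + γ ^ 2 * z₁ * z₂ : ℝ) : ℂ) • (1 : Matrix (Fin s) (Fin s) ℂ)
        - ((z₁ + z₂ : ℝ) : ℂ) • Ahat.map Complex.ofReal
        - ((w : ℂ) * Complex.I) • A.map Complex.ofReal)
    (hinv : ∀ z₁ z₂ : ℝ, z₁ < 0 → z₂ < 0 → IsUnit (M z₁ z₂).det)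
    (R : ℝ → ℝ → ℂ)
    (hR : ∀ z₁ z₂ : ℝ, R z₁ z₂ =
      1 + (fun i => (w : ℂ) * Complex.I * (b i : ℂ) + ((z₁ + z₂ : ℝ) : ℂ) * (bhat i : ℂ)) ⬝ᵥ
        ((M z₁ z₂)⁻¹ *ᵥ fun _ => 1)) :
    Tendsto (fun t : ℝ => R t t) atBot (nhds 1) :=
  lirk_amf_weak_stability_general A Ahat b bhat γ w hγ M hM R hR
end

section
/- Define τ(z_1, z_2) = (1 - γ(z_1 + z_2) + 2γ²z_1z_2) / ((1 - γz_1)(1 - γz_2)(1 + γ²z_1z_2)). Then τ(z_1, z_2) → 0 as z_1 = z_2 → -∞, and the refined-scheme stability function R(z_1, z_2, iw) = 1 + (iwb + zb̂)ᵀ (τ^{-1}I - iwA - zÂ)^{-1} 1 with z = z_1 + z_2 tends to 1 as z_1 = z_2 → -∞. -/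
/-!
Substituting `u = t⁻¹` turns `t · τ(t, t)` into a rational function of `u` that is continuous
and vanishes at `u = 0`; hence `τ(t, t) → 0` and `t · τ(t, t) → 0` as `t → -∞`. Consequently
`τ • M = 1 - τ (i w A + z Â) → 1`, and since `M⁻¹ = τ (τ • M)⁻¹`,
`R - 1 = (τ (i w b + z b̂)) ⬝ᵥ (τ • M)⁻¹ 𝟙 → 0 ⬝ᵥ 𝟙 = 0`.
-/

open Matrix Filter Topology

namespace Matrix

variable {n K : Type*} [Fintype n] [DecidableEq n] [Field K]

-- No invertibility hypothesis is needed: for singular `A` both sides are the junk value `0`.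
theorem inv_smul_of_ne_zero_s12 (A : Matrix n n K) {k : K} (hk : k ≠ 0) :
    (k • A)⁻¹ = k⁻¹ • A⁻¹ := by
  by_cases hA : IsUnit A.det
  · exact inv_eq_left_inv (by simp [smul_smul, hk, nonsing_inv_mul _ hA])
  · have hkA : ¬IsUnit (k • A).det := by
      rw [det_smul, isUnit_iff_ne_zero, mul_ne_zero_iff, not_and_or]
      exact .inr (by simpa using hA)
    rw [nonsing_inv_apply_not_isUnit _ hA, nonsing_inv_apply_not_isUnit _ hkA, smul_zero]

theorem dotProduct_inv_mulVec_eq_smul (A : Matrix n n K) (v x : n → K) {k : K} (hk : k ≠ 0) :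
    v ⬝ᵥ A⁻¹ *ᵥ x = (k • v) ⬝ᵥ (k • A)⁻¹ *ᵥ x := by
  rw [inv_smul_of_ne_zero_s12 A hk, smul_mulVec, smul_dotProduct, dotProduct_smul, smul_smul,
    mul_inv_cancel₀ hk, one_smul]

variable [TopologicalSpace K] [IsTopologicalDivisionRing K]

theorem tendsto_dotProduct_inv_mulVec_of_smul {α : Type*} {l : Filter α}
    {a : α → K} {M : α → Matrix n n K} {v : α → n → K} (ha : ∀ᶠ t in l, a t ≠ 0)
    (hM : Tendsto (fun t => a t • M t) l (𝓝 1)) (hv : Tendsto (fun t => a t • v t) l (𝓝 0))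
    (x : n → K) : Tendsto (fun t => v t ⬝ᵥ (M t)⁻¹ *ᵥ x) l (𝓝 0) := by
  have hinv : ContinuousAt Inv.inv (1 : Matrix n n K) := by
    refine continuousAt_matrix_inv _ ?_
    rw [det_one, Ring.inverse_eq_inv']
    exact continuousAt_inv₀ one_ne_zero
  have hMinv : Tendsto (fun t => (a t • M t)⁻¹ *ᵥ x) l (𝓝 ((1 : Matrix n n K)⁻¹ *ᵥ x)) :=
    ((continuous_id.matrix_mulVec continuous_const).tendsto _).comp (hinv.tendsto.comp hM)
  have hlim := ((continuous_fst.dotProduct continuous_snd).tendsto _).comp (hv.prodMk_nhds hMinv)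
  rw [zero_dotProduct] at hlim
  exact hlim.congr' (ha.mono fun t ht => (dotProduct_inv_mulVec_eq_smul _ _ _ ht).symm)

end Matrix

theorem tendsto_smul_smul_add_smul {α 𝕜 E : Type*} [Ring 𝕜] [TopologicalSpace 𝕜]
    [AddCommGroup E] [TopologicalSpace E] [Module 𝕜 E] [ContinuousAdd E] [ContinuousSMul 𝕜 E]
    {l : Filter α} {a c d : α → 𝕜} (hc : Tendsto (fun t => a t * c t) l (𝓝 0))
    (hd : Tendsto (fun t => a t * d t) l (𝓝 0)) (X Y : E) :
    Tendsto (fun t => a t • (c t • X + d t • Y)) l (𝓝 0) := by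
  have hlim := (hc.smul_const X).add (hd.smul_const Y)
  simp only [zero_smul, add_zero] at hlim
  simpa only [smul_add, smul_smul] using hlim

noncomputable def lirkAmfTau (γ z₁ z₂ : ℝ) : ℝ :=
  (1 - γ * (z₁ + z₂) + 2 * γ ^ 2 * z₁ * z₂) /
    ((1 - γ * z₁) * (1 - γ * z₂) * (1 + γ ^ 2 * z₁ * z₂))

section lirkAmfTau

variable {γ : ℝ}

theorem lirkAmfTau_pos (hγ : 0 < γ) {z₁ z₂ : ℝ} (h₁ : z₁ < 0) (h₂ : z₂ < 0) :
    0 < lirkAmfTau γ z₁ z₂ := by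
  have hγz₁ : γ * z₁ < 0 := mul_neg_of_pos_of_neg hγ h₁
  have hγz₂ : γ * z₂ < 0 := mul_neg_of_pos_of_neg hγ h₂
  have hprod : 0 < γ ^ 2 * z₁ * z₂ := by nlinarith
  unfold lirkAmfTau
  exact div_pos (by nlinarith) (mul_pos (mul_pos (by linarith) (by linarith)) (by linarith))

theorem inv_mul_lirkAmfTau_diag_inv (hγ : 0 < γ) {u : ℝ} (hu : u < 0) :
    u⁻¹ * lirkAmfTau γ u⁻¹ u⁻¹ =
      u * (u ^ 2 - 2 * γ * u + 2 * γ ^ 2) / ((u - γ) ^ 2 * (u ^ 2 + γ ^ 2)) := by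
  have hu₀ : u ≠ 0 := hu.ne
  have h₁ : 1 - γ * u⁻¹ ≠ 0 := by nlinarith [inv_lt_zero.mpr hu]
  have h₂ : 1 + γ ^ 2 * u⁻¹ * u⁻¹ ≠ 0 := by nlinarith [mul_self_nonneg (γ * u⁻¹)]
  unfold lirkAmfTau
  field_simp
  ring

theorem tendsto_mul_lirkAmfTau_diag_atBot (hγ : 0 < γ) :
    Tendsto (fun t => t * lirkAmfTau γ t t) atBot (𝓝 0) := by
  have hcont : ContinuousAt
      (fun u : ℝ => u * (u ^ 2 - 2 * γ * u + 2 * γ ^ 2) / ((u - γ) ^ 2 * (u ^ 2 + γ ^ 2))) 0 :=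
    ContinuousAt.div (by fun_prop) (by fun_prop) (by simp [hγ.ne'])
  have hlim := hcont.tendsto.comp tendsto_inv_atBot_zero
  simp only [zero_mul, zero_div] at hlim
  refine hlim.congr' ?_
  filter_upwards [eventually_lt_atBot 0] with t ht
  simpa using (inv_mul_lirkAmfTau_diag_inv hγ (inv_lt_zero.mpr ht)).symm

theorem tendsto_lirkAmfTau_diag_atBot (hγ : 0 < γ) :
    Tendsto (fun t => lirkAmfTau γ t t) atBot (𝓝 0) := by
  have hlim := tendsto_inv_atBot_zero.mul (tendsto_mul_lirkAmfTau_diag_atBot hγ)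
  rw [zero_mul] at hlim
  refine hlim.congr' ?_
  filter_upwards [eventually_lt_atBot 0] with t ht
  rw [inv_mul_cancel_left₀ ht.ne]

end lirkAmfTau

theorem lirk_amf_refined_weak_stability_general {s : ℕ}
    (A Ahat : Matrix (Fin s) (Fin s) ℝ) (b bhat : Fin s → ℝ) (γ w : ℝ) (hγ : 0 < γ)
    (τ : ℝ → ℝ → ℝ)
    (hτ : ∀ z₁ z₂ : ℝ, τ z₁ z₂ =
      (1 - γ * (z₁ + z₂) + 2 * γ ^ 2 * z₁ * z₂) /
        ((1 - γ * z₁) * (1 - γ * z₂) * (1 + γ ^ 2 * z₁ * z₂)))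
    (M : ℝ → ℝ → Matrix (Fin s) (Fin s) ℂ)
    (hM : ∀ z₁ z₂ : ℝ, M z₁ z₂ =
      (((τ z₁ z₂)⁻¹ : ℝ) : ℂ) • (1 : Matrix (Fin s) (Fin s) ℂ)
        - ((w : ℂ) * Complex.I) • A.map Complex.ofReal
        - ((z₁ + z₂ : ℝ) : ℂ) • Ahat.map Complex.ofReal)
    (R : ℝ → ℝ → ℂ)
    (hR : ∀ z₁ z₂ : ℝ, R z₁ z₂ =
      1 + (fun i => (w : ℂ) * Complex.I * (b i : ℂ) + ((z₁ + z₂ : ℝ) : ℂ) * (bhat i : ℂ)) ⬝ᵥ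
        ((M z₁ z₂)⁻¹ *ᵥ fun _ => 1)) :
    Tendsto (fun t : ℝ => τ t t) atBot (nhds 0) ∧
      Tendsto (fun t : ℝ => R t t) atBot (nhds 1) := by
  have hτ : τ = lirkAmfTau γ := funext₂ hτ
  subst hτ
  refine ⟨tendsto_lirkAmfTau_diag_atBot hγ, ?_⟩
  set a : ℝ → ℂ := fun t => (lirkAmfTau γ t t : ℂ)
  have ha : ∀ᶠ t in atBot, a t ≠ 0 := by
    filter_upwards [eventually_lt_atBot 0] with t ht
    exact Complex.ofReal_ne_zero.mpr (lirkAmfTau_pos hγ ht ht).ne'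
  have hac : Tendsto (fun t => a t * ((w : ℂ) * Complex.I)) atBot (𝓝 0) := by
    simpa using ((Complex.continuous_ofReal.tendsto 0).comp
      (tendsto_lirkAmfTau_diag_atBot hγ)).mul_const ((w : ℂ) * Complex.I)
  have had : Tendsto (fun t => a t * ((t + t : ℝ) : ℂ)) atBot (𝓝 0) := by
    have hlim := ((Complex.continuous_ofReal.tendsto 0).comp
      (tendsto_mul_lirkAmfTau_diag_atBot hγ)).const_mul 2
    rw [Complex.ofReal_zero, mul_zero] at hlim
    exact hlim.congr fun t => by simp only [a, Function.comp_apply]; push_cast; ring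
  have haM : Tendsto (fun t => a t • M t t) atBot (𝓝 1) := by
    have hlim := (tendsto_smul_smul_add_smul hac had (A.map Complex.ofReal)
      (Ahat.map Complex.ofReal)).const_sub 1
    rw [sub_zero] at hlim
    refine hlim.congr' ?_
    filter_upwards [ha] with t ht
    rw [hM, Complex.ofReal_inv, smul_sub, smul_sub, smul_smul, mul_inv_cancel₀ ht, one_smul,
      smul_add, sub_sub]
  have hav := tendsto_smul_smul_add_smul hac had (fun i => (b i : ℂ)) (fun i => (bhat i : ℂ))
  have hlim := (tendsto_dotProduct_inv_mulVec_of_smul ha haM hav fun _ => 1).const_add 1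
  rw [add_zero] at hlim
  exact hlim.congr fun t => (hR t t).symm

/-- Weak stability of the one-refinement LIRK+AMF scheme:
`τ(z₁,z₂) = (1 - γ(z₁+z₂) + 2γ²z₁z₂)/((1-γz₁)(1-γz₂)(1+γ²z₁z₂)) → 0` as `z₁ = z₂ → -∞`,
and the refined stability function
`R(z₁,z₂,iw) = 1 + (iwb + zb̂)ᵀ(τ⁻¹I - iwA - zÂ)⁻¹𝟙` (with `z = z₁+z₂`) tends to `1`. -/
theorem lirk_amf_refined_weak_stability {s : ℕ}
    (A Ahat : Matrix (Fin s) (Fin s) ℝ) (b bhat : Fin s → ℝ) (γ w : ℝ) (hγ : 0 < γ)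
    (τ : ℝ → ℝ → ℝ)
    (hτ : ∀ z₁ z₂ : ℝ, τ z₁ z₂ =
      (1 - γ * (z₁ + z₂) + 2 * γ ^ 2 * z₁ * z₂) /
        ((1 - γ * z₁) * (1 - γ * z₂) * (1 + γ ^ 2 * z₁ * z₂)))
    (M : ℝ → ℝ → Matrix (Fin s) (Fin s) ℂ)
    (hM : ∀ z₁ z₂ : ℝ, M z₁ z₂ =
      (((τ z₁ z₂)⁻¹ : ℝ) : ℂ) • (1 : Matrix (Fin s) (Fin s) ℂ)
        - ((w : ℂ) * Complex.I) • A.map Complex.ofReal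
        - ((z₁ + z₂ : ℝ) : ℂ) • Ahat.map Complex.ofReal)
    (hinv : ∀ z₁ z₂ : ℝ, z₁ < 0 → z₂ < 0 → IsUnit (M z₁ z₂).det)
    (R : ℝ → ℝ → ℂ)
    (hR : ∀ z₁ z₂ : ℝ, R z₁ z₂ =
      1 + (fun i => (w : ℂ) * Complex.I * (b i : ℂ) + ((z₁ + z₂ : ℝ) : ℂ) * (bhat i : ℂ)) ⬝ᵥ
        ((M z₁ z₂)⁻¹ *ᵥ fun _ => 1)) :
    Tendsto (fun t : ℝ => τ t t) atBot (nhds 0) ∧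
      Tendsto (fun t : ℝ => R t t) atBot (nhds 1) :=
  lirk_amf_refined_weak_stability_general A Ahat b bhat γ w hγ τ hτ M hM R hR
end
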